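/- Let α, β ≥ 1 be real numbers and c_f, c_g > 0. Suppose f, g : (0,∞) → ℝ are measurable and bounded, vanish identically on (1,∞), and satisfy the one-sided asymptotics f(x) ~ c_f (1−x)^{α−1} and g(x) ~ c_g (1−x)^{β−1} as x → 1⁻ (asymptotic equivalence, i.e. the ratio tends to 1). Then their Mellin convolution satisfies (f ∗ g)(x) ~ c_f c_g (Γ(α)Γ(β)/Γ(α+β)) (1−x)^{α+β−1} as x → 1⁻. -/

import Mathlib

open MeasureTheory Set Filter Topology
open ProbabilityTheory (beta beta_pos)

/-!
For `x` close to `1` the convolution is an integral over `t ∈ (x, 1)`, where both `x / t` and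
`t` are close to `1`. Since `1 - x / t = (t - x) / t`, the asymptotics of `f` and `g` pin the
integrand, up to factors `(1 ± δ)²`, to `c_f c_g (t - x)^(α-1) (1 - t)^(β-1) t^(-α)`, and
`1 ≤ t^(-α) ≤ x^(-α) → 1`. The remaining kernel integrates to `(1 - x)^(α+β-1) B(α, β)`, with
`B(α, β) = Γ(α) Γ(β) / Γ(α + β)` the Beta function (`ProbabilityTheory.beta`).
-/

theorem integral_sub_rpow_mul_sub_rpow {a b p q : ℝ} (hab : a < b) (hp : 0 < p) (hq : 0 < q) :
    ∫ t in a..b, (t - a) ^ (p - 1) * (b - t) ^ (q - 1) =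
      (b - a) ^ (p + q - 1) * beta p q := by
  have hba : 0 < b - a := sub_pos.2 hab
  have hshift := intervalIntegral.integral_comp_sub_right
    (fun s => s ^ (p - 1) * ((b - a) - s) ^ (q - 1)) (a := a) (b := b) a
  simp only [sub_sub_sub_cancel_right, sub_self] at hshift
  rw [hshift]
  apply Complex.ofReal_injective
  have hbeta := Complex.betaIntegral_scaled p q hba
  rw [Complex.betaIntegral_eq_Gamma_mul_div _ _ (by simpa) (by simpa)] at hbeta
  rw [beta]
  push_cast [← intervalIntegral.integral_ofReal]
  rw [Complex.ofReal_cpow hba.le, ← Complex.Gamma_ofReal, ← Complex.Gamma_ofReal,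
    ← Complex.Gamma_ofReal]
  simp only [Complex.ofReal_sub, Complex.ofReal_add, Complex.ofReal_one] at hbeta ⊢
  rw [← hbeta]
  refine intervalIntegral.integral_congr fun x hx => ?_
  rw [uIcc_of_le hba.le] at hx
  rw [Complex.ofReal_cpow hx.1, Complex.ofReal_cpow (sub_nonneg.2 hx.2)]
  push_cast
  ring

theorem one_sub_div_rpow_div {x t : ℝ} (ht : 0 < t) (hxt : x ≤ t) (α : ℝ) :
    (1 - x / t) ^ (α - 1) / t = (t - x) ^ (α - 1) * t ^ (-α) := by
  rw [one_sub_div ht.ne', Real.div_rpow (sub_nonneg.2 hxt) ht.le, Real.rpow_neg ht.le,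
    show α = (α - 1) + 1 by ring, Real.rpow_add ht, Real.rpow_one, add_sub_cancel_right]
  have : 0 < t ^ (α - 1) := Real.rpow_pos_of_pos ht _
  field_simp

theorem mul_mem_Icc_of_mem_Icc {δ a b u v : ℝ} (hδ : δ ≤ 1) (ha : 0 ≤ a) (hb : 0 ≤ b)
    (hu : u ∈ Icc ((1 - δ) * a) ((1 + δ) * a)) (hv : v ∈ Icc ((1 - δ) * b) ((1 + δ) * b)) :
    u * v ∈ Icc ((1 - δ) ^ 2 * (a * b)) ((1 + δ) ^ 2 * (a * b)) := by
  have hδ' : 0 ≤ 1 - δ := sub_nonneg.2 hδ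
  have hu0 : 0 ≤ u := (mul_nonneg hδ' ha).trans hu.1
  have hv0 : 0 ≤ v := (mul_nonneg hδ' hb).trans hv.1
  constructor
  · calc (1 - δ) ^ 2 * (a * b) = ((1 - δ) * a) * ((1 - δ) * b) := by ring
      _ ≤ u * v := mul_le_mul hu.1 hv.1 (mul_nonneg hδ' hb) hu0
  · calc u * v ≤ ((1 + δ) * a) * ((1 + δ) * b) := mul_le_mul hu.2 hv.2 hv0 (hu0.trans hu.2)
      _ = (1 + δ) ^ 2 * (a * b) := by ring

theorem eventually_mem_Icc_of_tendsto_div {X : Type*} {l : Filter X} {u w : X → ℝ}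
    (h : Tendsto (fun x => u x / w x) l (𝓝 1)) (hw : ∀ᶠ x in l, 0 < w x) {δ : ℝ} (hδ : 0 < δ) :
    ∀ᶠ x in l, u x ∈ Icc ((1 - δ) * w x) ((1 + δ) * w x) := by
  filter_upwards [h (Ioo_mem_nhds (by linarith : 1 - δ < 1) (by linarith : 1 < 1 + δ)), hw]
    with x hx hwx
  rw [mem_preimage, mem_Ioo, lt_div_iff₀ hwx, div_lt_iff₀ hwx] at hx
  exact ⟨hx.1.le, hx.2.le⟩

theorem tendsto_of_eventually_mem_Icc {ι κ : Type*} {l : Filter ι} {L : Filter κ} [L.NeBot]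
    {r : ι → ℝ} {lo hi : κ → ℝ} {c : ℝ} (hlo : Tendsto lo L (𝓝 c)) (hhi : Tendsto hi L (𝓝 c))
    (h : ∀ᶠ δ in L, ∀ᶠ x in l, r x ∈ Icc (lo δ) (hi δ)) : Tendsto r l (𝓝 c) := by
  refine tendsto_order.2 ⟨fun a ha => ?_, fun a ha => ?_⟩
  · obtain ⟨δ, hδ, hloδ⟩ := (h.and (hlo.eventually (lt_mem_nhds ha))).exists
    filter_upwards [hδ] with x hx using hloδ.trans_le hx.1
  · obtain ⟨δ, hδ, hhiδ⟩ := (h.and (hhi.eventually (gt_mem_nhds ha))).exists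
    filter_upwards [hδ] with x hx using hx.2.trans_lt hhiδ

theorem setIntegral_mem_Icc_of_forall_mem_Icc {X : Type*} [MeasurableSpace X] {μ : Measure X}
    {s : Set X} (hs : MeasurableSet s) {h K : X → ℝ} {a b : ℝ} (hK : IntegrableOn K s μ)
    (hh : AEStronglyMeasurable h (μ.restrict s)) (hbd : ∀ t ∈ s, h t ∈ Icc (a * K t) (b * K t)) :
    ∫ t in s, h t ∂μ ∈ Icc (a * ∫ t in s, K t ∂μ) (b * ∫ t in s, K t ∂μ) := by
  have hint : IntegrableOn h s μ :=
    ((hK.const_mul a).norm.add (hK.const_mul b).norm).mono' hh <|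
      ae_restrict_of_forall_mem hs fun t ht =>
        (abs_le_max_abs_abs (hbd t ht).1 (hbd t ht).2).trans
          (max_le_add_of_nonneg (abs_nonneg _) (abs_nonneg _))
  rw [← integral_const_mul, ← integral_const_mul]
  exact ⟨setIntegral_mono_on (hK.const_mul a) hint hs fun t ht => (hbd t ht).1,
    setIntegral_mono_on hint (hK.const_mul b) hs fun t ht => (hbd t ht).2⟩

noncomputable def mellinConv (f g : ℝ → ℝ) (x : ℝ) : ℝ :=
  ∫ t in Ioi 0, f (x / t) * g t / t

theorem mellinConv_eq_integral_Ioo {f g : ℝ → ℝ} (hf : ∀ y, 1 < y → f y = 0)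
    (hg : ∀ y, 1 < y → g y = 0) {x : ℝ} (hx : 0 < x) :
    mellinConv f g x = ∫ t in Ioo x 1, f (x / t) * g t / t := by
  refine setIntegral_eq_of_subset_of_ae_sdiff_eq_zero measurableSet_Ioi.nullMeasurableSet
    (fun t ht => hx.trans ht.1) ?_
  filter_upwards [volume.ae_ne x, volume.ae_ne 1] with t htx ht1 ⟨ht0, htI⟩
  rcases htx.lt_or_gt with htx | htx
  · rw [hf _ ((one_lt_div ht0).2 htx), zero_mul, zero_div]
  · rw [hg t (ht1.lt_or_gt.resolve_left fun h => htI ⟨htx, h⟩), mul_zero, zero_div]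

theorem mellinConv_mem_Icc {f g : ℝ → ℝ} {α β cf cg δ x : ℝ} (hα : 1 ≤ α) (hβ : 1 ≤ β)
    (hcf : 0 ≤ cf) (hcg : 0 ≤ cg) (hδ : δ ≤ 1) (hfm : Measurable f) (hgm : Measurable g)
    (hf0 : ∀ y, 1 < y → f y = 0) (hg0 : ∀ y, 1 < y → g y = 0) (hx0 : 0 < x) (hx1 : x < 1)
    (hf : ∀ y ∈ Ioo x 1,
      f y ∈ Icc ((1 - δ) * (cf * (1 - y) ^ (α - 1))) ((1 + δ) * (cf * (1 - y) ^ (α - 1))))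
    (hg : ∀ y ∈ Ioo x 1,
      g y ∈ Icc ((1 - δ) * (cg * (1 - y) ^ (β - 1))) ((1 + δ) * (cg * (1 - y) ^ (β - 1)))) :
    mellinConv f g x ∈ Icc ((1 - δ) ^ 2 * (cf * cg * beta α β * (1 - x) ^ (α + β - 1)))
      ((1 + δ) ^ 2 * x ^ (-α) * (cf * cg * beta α β * (1 - x) ^ (α + β - 1))) := by
  set K : ℝ → ℝ := fun t => (t - x) ^ (α - 1) * (1 - t) ^ (β - 1) with hK_def
  have hK : IntegrableOn K (Ioo x 1) := by
    have hKc : Continuous K := by rw [hK_def]; fun_prop (disch := linarith)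
    exact hKc.integrableOn_Icc.mono_set Ioo_subset_Icc_self
  have hKint : ∫ t in Ioo x 1, K t = (1 - x) ^ (α + β - 1) * beta α β := by
    rw [← integral_Ioc_eq_integral_Ioo, ← intervalIntegral.integral_of_le hx1.le]
    exact integral_sub_rpow_mul_sub_rpow hx1 (by linarith) (by linarith)
  have hbd : ∀ t ∈ Ioo x 1, f (x / t) * g t / t ∈
      Icc ((1 - δ) ^ 2 * (cf * cg) * K t) ((1 + δ) ^ 2 * (cf * cg) * x ^ (-α) * K t) := by
    rintro t ⟨hxt, ht1⟩
    have ht0 : 0 < t := hx0.trans hxt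
    have hy : x / t ∈ Ioo x 1 :=
      ⟨(lt_div_iff₀ ht0).2 (by nlinarith), (div_lt_one ht0).2 hxt⟩
    obtain ⟨hlo, hhi⟩ := mul_mem_Icc_of_mem_Icc hδ
      (mul_nonneg hcf (Real.rpow_nonneg (sub_nonneg.2 hy.2.le) _))
      (mul_nonneg hcg (Real.rpow_nonneg (sub_nonneg.2 ht1.le) _)) (hf _ hy) (hg t ⟨hxt, ht1⟩)
    have hkernel : cf * (1 - x / t) ^ (α - 1) * (cg * (1 - t) ^ (β - 1)) / t =
        cf * cg * K t * t ^ (-α) := by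
      calc _ = cf * cg * (1 - t) ^ (β - 1) * ((1 - x / t) ^ (α - 1) / t) := by ring
        _ = _ := by rw [one_sub_div_rpow_div ht0 hxt.le]; ring
    have hKt : 0 ≤ cf * cg * K t := mul_nonneg (mul_nonneg hcf hcg)
      (mul_nonneg (Real.rpow_nonneg (sub_nonneg.2 hxt.le) _)
        (Real.rpow_nonneg (sub_nonneg.2 ht1.le) _))
    have htα : 1 ≤ t ^ (-α) :=
      Real.one_le_rpow_of_pos_of_le_one_of_nonpos ht0 ht1.le (by linarith)
    have hxtα : t ^ (-α) ≤ x ^ (-α) :=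
      Real.rpow_le_rpow_of_nonpos hx0 hxt.le (by linarith)
    constructor
    · calc (1 - δ) ^ 2 * (cf * cg) * K t ≤ (1 - δ) ^ 2 * (cf * cg * K t * t ^ (-α)) := by
            rw [mul_assoc]
            exact mul_le_mul_of_nonneg_left (le_mul_of_one_le_right hKt htα) (sq_nonneg _)
        _ ≤ f (x / t) * g t / t := by
            rw [← hkernel, ← mul_div_assoc]; gcongr
    · calc f (x / t) * g t / t ≤ (1 + δ) ^ 2 * (cf * cg * K t * t ^ (-α)) := by
            rw [← hkernel, ← mul_div_assoc]; gcongr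
        _ ≤ (1 + δ) ^ 2 * (cf * cg * K t * x ^ (-α)) :=
            mul_le_mul_of_nonneg_left (mul_le_mul_of_nonneg_left hxtα hKt) (sq_nonneg _)
        _ = (1 + δ) ^ 2 * (cf * cg) * x ^ (-α) * K t := by ring
  have hI := setIntegral_mem_Icc_of_forall_mem_Icc measurableSet_Ioo hK
    (by fun_prop : Measurable fun t => f (x / t) * g t / t).aestronglyMeasurable hbd
  rw [← mellinConv_eq_integral_Ioo hf0 hg0 hx0, hKint] at hI
  convert hI using 2 <;> ring

theorem eventually_mellinConv_div_mem_Icc {f g : ℝ → ℝ} {α β cf cg δ : ℝ} (hα : 1 ≤ α)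
    (hβ : 1 ≤ β) (hcf : 0 < cf) (hcg : 0 < cg) (hfm : Measurable f) (hgm : Measurable g)
    (hf0 : ∀ y, 1 < y → f y = 0) (hg0 : ∀ y, 1 < y → g y = 0)
    (hfasym : Tendsto (fun y => f y / (cf * (1 - y) ^ (α - 1))) (𝓝[<] 1) (𝓝 1))
    (hgasym : Tendsto (fun y => g y / (cg * (1 - y) ^ (β - 1))) (𝓝[<] 1) (𝓝 1))
    (hδ : δ ∈ Ioo 0 1) :
    ∀ᶠ x in 𝓝[<] 1, mellinConv f g x / (cf * cg * beta α β * (1 - x) ^ (α + β - 1)) ∈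
      Icc ((1 - δ) ^ 2) ((1 + δ) ^ 3) := by
  have hpos {c γ : ℝ} (hc : 0 < c) : ∀ᶠ y in 𝓝[<] (1 : ℝ), 0 < c * (1 - y) ^ γ :=
    eventually_mem_nhdsWithin.mono fun y hy => mul_pos hc (Real.rpow_pos_of_pos (sub_pos.2 hy) _)
  obtain ⟨m, hm, hfg⟩ := mem_nhdsLT_iff_exists_Ioo_subset.1
    ((eventually_mem_Icc_of_tendsto_div hfasym (hpos hcf) hδ.1).and
      (eventually_mem_Icc_of_tendsto_div hgasym (hpos hcg) hδ.1))
  have hxα : ∀ᶠ x in 𝓝[<] (1 : ℝ), x ^ (-α) < 1 + δ := by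
    have hcont := (Real.continuousAt_rpow_const 1 (-α) (Or.inl one_ne_zero)).tendsto
    rw [Real.one_rpow] at hcont
    exact (hcont.mono_left nhdsWithin_le_nhds).eventually_lt_const (by linarith [hδ.1])
  filter_upwards [Ioo_mem_nhdsLT (max_lt hm one_pos), hxα] with x hx hxα
  have hx0 : 0 < x := (le_max_right _ _).trans_lt hx.1
  have hmx : m < x := (le_max_left _ _).trans_lt hx.1
  obtain ⟨hlo, hhi⟩ := mellinConv_mem_Icc hα hβ hcf.le hcg.le hδ.2.le hfm hgm hf0 hg0 hx0 hx.2
    (fun y hy => (hfg ⟨hmx.trans hy.1, hy.2⟩).1) (fun y hy => (hfg ⟨hmx.trans hy.1, hy.2⟩).2)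
  have hD : 0 < cf * cg * beta α β * (1 - x) ^ (α + β - 1) :=
    mul_pos (mul_pos (mul_pos hcf hcg) (beta_pos (by linarith) (by linarith)))
      (Real.rpow_pos_of_pos (sub_pos.2 hx.2) _)
  rw [mem_Icc, le_div_iff₀ hD, div_le_iff₀ hD]
  refine ⟨hlo, hhi.trans ?_⟩
  calc (1 + δ) ^ 2 * x ^ (-α) * _ ≤ (1 + δ) ^ 2 * (1 + δ) * _ := by gcongr
    _ = (1 + δ) ^ 3 * _ := by ring

theorem stmt18_general
    (α β : ℝ) (hα : 1 ≤ α) (hβ : 1 ≤ β)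
    (cf cg : ℝ) (hcf : 0 < cf) (hcg : 0 < cg)
    (f g : ℝ → ℝ) (hfm : Measurable f) (hgm : Measurable g)
    (hf0 : ∀ x : ℝ, 1 < x → f x = 0) (hg0 : ∀ x : ℝ, 1 < x → g x = 0)
    (hfasym : Tendsto (fun x : ℝ => f x / (cf * (1 - x) ^ (α - 1)))
      (nhdsWithin 1 (Iio 1)) (nhds 1))
    (hgasym : Tendsto (fun x : ℝ => g x / (cg * (1 - x) ^ (β - 1)))
      (nhdsWithin 1 (Iio 1)) (nhds 1)) :
    Tendsto (fun x : ℝ => (∫ t in Ioi (0:ℝ), f (x / t) * g t / t) /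
        (cf * cg * (Real.Gamma α * Real.Gamma β / Real.Gamma (α + β)) *
          (1 - x) ^ (α + β - 1)))
      (nhdsWithin 1 (Iio 1)) (nhds 1) := by
  have hlo : Tendsto (fun δ : ℝ => (1 - δ) ^ 2) (𝓝[>] 0) (𝓝 1) :=
    (((continuous_const.sub continuous_id).pow 2).tendsto' 0 1 (by norm_num)).mono_left
      nhdsWithin_le_nhds
  have hhi : Tendsto (fun δ : ℝ => (1 + δ) ^ 3) (𝓝[>] 0) (𝓝 1) :=
    (((continuous_const.add continuous_id).pow 3).tendsto' 0 1 (by norm_num)).mono_left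
      nhdsWithin_le_nhds
  exact tendsto_of_eventually_mem_Icc hlo hhi <| eventually_of_mem (Ioo_mem_nhdsGT one_pos)
    fun δ hδ => eventually_mellinConv_div_mem_Icc hα hβ hcf hcg hfm hgm hf0 hg0 hfasym hgasym hδ

/-- One-sided asymptotics at `1⁻` of a Mellin convolution: if `f, g` are
bounded measurable functions vanishing on `(1,∞)` with
`f(x) ~ c_f (1−x)^{α−1}` and `g(x) ~ c_g (1−x)^{β−1}` as `x → 1⁻`, then
`(f ∗ g)(x) ~ c_f c_g (Γ(α)Γ(β)/Γ(α+β)) (1−x)^{α+β−1}` as `x → 1⁻`. -/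
theorem stmt18
    (α β : ℝ) (hα : 1 ≤ α) (hβ : 1 ≤ β)
    (cf cg : ℝ) (hcf : 0 < cf) (hcg : 0 < cg)
    (f g : ℝ → ℝ) (hfm : Measurable f) (hgm : Measurable g)
    (hfb : ∃ C : ℝ, ∀ x, |f x| ≤ C) (hgb : ∃ C : ℝ, ∀ x, |g x| ≤ C)
    (hf0 : ∀ x : ℝ, 1 < x → f x = 0) (hg0 : ∀ x : ℝ, 1 < x → g x = 0)
    (hfasym : Tendsto (fun x : ℝ => f x / (cf * (1 - x) ^ (α - 1)))
      (nhdsWithin 1 (Iio 1)) (nhds 1))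
    (hgasym : Tendsto (fun x : ℝ => g x / (cg * (1 - x) ^ (β - 1)))
      (nhdsWithin 1 (Iio 1)) (nhds 1)) :
    Tendsto (fun x : ℝ => (∫ t in Ioi (0:ℝ), f (x / t) * g t / t) /
        (cf * cg * (Real.Gamma α * Real.Gamma β / Real.Gamma (α + β)) *
          (1 - x) ^ (α + β - 1)))
      (nhdsWithin 1 (Iio 1)) (nhds 1) :=
  stmt18_general α β hα hβ cf cg hcf hcg f g hfm hgm hf0 hg0 hfasym hgasym
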